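/- arXiv:1205.5912 — 6 statements merged into one kernel-verified Lean document; each statement's English description precedes it below -/
import Mathlib

section
/- For nonempty finite sets A₁, A₂, A₃, A₄ ⊆ 𝔽₂ⁿ, the normalized energy ω(A₁,A₂,A₃,A₄) := |{(a₁,a₂,a₃,a₄) ∈ A₁×A₂×A₃×A₄ : a₁+a₂+a₃+a₄ = 0}| / (|A₁||A₂||A₃||A₄|)^{3/4} satisfies 0 ≤ ω(A₁,A₂,A₃,A₄) ≤ 1. -/
open Finset Pointwise

noncomputable def energy {n : ℕ} (A₁ A₂ A₃ A₄ : Finset (Fin n → ZMod 2)) : ℝ :=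
  (((A₁ ×ˢ A₂ ×ˢ A₃ ×ˢ A₄).filter
      (fun p => p.1 + p.2.1 + p.2.2.1 + p.2.2.2 = 0)).card : ℝ) /
    ((A₁.card : ℝ) * A₂.card * A₃.card * A₄.card) ^ ((3 : ℝ) / 4)

/-!
In a zero-sum quadruple any three entries determine the fourth, so the number `N` of such
quadruples in `A₁ × A₂ × A₃ × A₄` is at most the product of any three of the `|Aᵢ|`.
Multiplying the four bounds gives `N ^ 4 ≤ (|A₁||A₂||A₃||A₄|) ^ 3`.
-/

namespace Finset

variable {G : Type*} [AddCommGroup G] [DecidableEq G]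

def zeroSumQuadruples (A₁ A₂ A₃ A₄ : Finset G) : Finset (G × G × G × G) :=
  (A₁ ×ˢ A₂ ×ˢ A₃ ×ˢ A₄).filter (fun p => p.1 + p.2.1 + p.2.2.1 + p.2.2.2 = 0)

theorem card_zeroSumQuadruples_le (A₁ A₂ A₃ A₄ : Finset G) :
    #(zeroSumQuadruples A₁ A₂ A₃ A₄) ≤ #A₂ * #A₃ * #A₄ := by
  have first_eq : ∀ p ∈ zeroSumQuadruples A₁ A₂ A₃ A₄,
      p.1 = -(p.2.1 + p.2.2.1 + p.2.2.2) := by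
    intro p hp
    rw [eq_neg_iff_add_eq_zero, ← add_assoc, ← add_assoc]
    exact (mem_filter.1 hp).2
  rw [mul_assoc, ← card_product, ← card_product]
  refine card_le_card_of_injOn Prod.snd (fun p hp => ?_) fun p hp q hq h => ?_
  · simp only [zeroSumQuadruples, mem_coe, mem_filter, mem_product] at hp ⊢
    tauto
  · exact Prod.ext (by rw [first_eq p hp, first_eq q hq, h]) h

theorem card_zeroSumQuadruples_rotate (A₁ A₂ A₃ A₄ : Finset G) :
    #(zeroSumQuadruples A₁ A₂ A₃ A₄) = #(zeroSumQuadruples A₂ A₃ A₄ A₁) := by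
  refine card_nbij' (fun p => (p.2.1, p.2.2.1, p.2.2.2, p.1))
    (fun p => (p.2.2.2, p.1, p.2.1, p.2.2.1)) ?_ ?_ (fun _ _ => rfl) (fun _ _ => rfl) <;>
  · rintro ⟨a, b, c, d⟩ hp
    simp only [zeroSumQuadruples, mem_coe, mem_filter, mem_product] at hp ⊢
    refine ⟨by tauto, ?_⟩
    rw [← hp.2]
    abel

theorem card_zeroSumQuadruples_pow_four_le (A₁ A₂ A₃ A₄ : Finset G) :
    #(zeroSumQuadruples A₁ A₂ A₃ A₄) ^ 4 ≤ (#A₁ * #A₂ * #A₃ * #A₄) ^ 3 := by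
  have h₁ := card_zeroSumQuadruples_le A₁ A₂ A₃ A₄
  have h₂ := card_zeroSumQuadruples_le A₂ A₃ A₄ A₁
  have h₃ := card_zeroSumQuadruples_le A₃ A₄ A₁ A₂
  have h₄ := card_zeroSumQuadruples_le A₄ A₁ A₂ A₃
  simp only [← card_zeroSumQuadruples_rotate] at h₂ h₃ h₄
  calc #(zeroSumQuadruples A₁ A₂ A₃ A₄) ^ 4
      ≤ (#A₂ * #A₃ * #A₄) * (#A₃ * #A₄ * #A₁) * (#A₄ * #A₁ * #A₂) * (#A₁ * #A₂ * #A₃) := by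
        rw [pow_succ, pow_succ, pow_succ, pow_one]
        gcongr
    _ = (#A₁ * #A₂ * #A₃ * #A₄) ^ 3 := by ring

end Finset

theorem Real.le_rpow_div_of_pow_le_pow {x y : ℝ} {k m : ℕ} (hx : 0 ≤ x) (hy : 0 ≤ y)
    (hm : 0 < m) (h : x ^ m ≤ y ^ k) : x ≤ y ^ ((k : ℝ) / m) := by
  rw [div_eq_mul_inv, Real.rpow_mul hy, Real.rpow_natCast,
    Real.le_rpow_inv_iff_of_pos hx (pow_nonneg hy k) (by positivity), Real.rpow_natCast]
  exact h

theorem energy_nonneg_le_one_general {n : ℕ} (A₁ A₂ A₃ A₄ : Finset (Fin n → ZMod 2)) :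
    0 ≤ energy A₁ A₂ A₃ A₄ ∧ energy A₁ A₂ A₃ A₄ ≤ 1 := by
  refine ⟨by unfold energy; positivity, ?_⟩
  change (#(zeroSumQuadruples A₁ A₂ A₃ A₄) : ℝ) /
    ((#A₁ : ℝ) * #A₂ * #A₃ * #A₄) ^ ((3 : ℕ) / (4 : ℕ) : ℝ) ≤ 1
  refine div_le_one_of_le₀ (Real.le_rpow_div_of_pow_le_pow (by positivity) (by positivity)
    (by norm_num) ?_) (by positivity)
  exact_mod_cast card_zeroSumQuadruples_pow_four_le A₁ A₂ A₃ A₄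

theorem energy_nonneg_le_one {n : ℕ} (A₁ A₂ A₃ A₄ : Finset (Fin n → ZMod 2))
    (h₁ : A₁.Nonempty) (h₂ : A₂.Nonempty) (h₃ : A₃.Nonempty) (h₄ : A₄.Nonempty) :
    0 ≤ energy A₁ A₂ A₃ A₄ ∧ energy A₁ A₂ A₃ A₄ ≤ 1 :=
  energy_nonneg_le_one_general A₁ A₂ A₃ A₄
end

section
/- For every real J ≥ 1 and every real α with 1/2 + 1/(2√(2J)) ≤ α < 19/20, one has α + α^{1/2}(1−α)^{1/2} ≥ 1 + 1/(20√(2J)). -/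
theorem case1_inequality (J α : ℝ) (hJ : 1 ≤ J)
    (hα₁ : 1 / 2 + 1 / (2 * Real.sqrt (2 * J)) ≤ α) (hα₂ : α < 19 / 20) :
    α + Real.sqrt α * Real.sqrt (1 - α) ≥ 1 + 1 / (20 * Real.sqrt (2 * J)) := by
  set s := Real.sqrt (2 * J) with hs
  have hs1 : 1 ≤ s := by
    rw [hs, show (1 : ℝ) = Real.sqrt 1 by simp]
    exact Real.sqrt_le_sqrt (by linarith)
  have hspos : 0 < s := by linarith
  have hα0 : (1 / 2 : ℝ) ≤ α := by
    have : 0 < 1 / (2 * s) := by positivity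
    linarith
  have hα1 : α ≤ 1 := by linarith
  -- √α √(1-α) = √(α(1-α)) ≥ 2α(1-α)
  have hx0 : 0 ≤ α * (1 - α) := by nlinarith
  have hx14 : α * (1 - α) ≤ 1 / 4 := by nlinarith
  have h1 : Real.sqrt α * Real.sqrt (1 - α) = Real.sqrt (α * (1 - α)) :=
    (Real.sqrt_mul (by linarith) _).symm
  have h2 : 2 * (α * (1 - α)) ≤ Real.sqrt (α * (1 - α)) := by
    have hsq := Real.sq_sqrt hx0
    have hle : Real.sqrt (α * (1 - α)) ≤ 1 / 2 := by
      rw [show (1 / 2 : ℝ) = Real.sqrt (1 / 4) by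
        rw [show (1 / 4 : ℝ) = (1 / 2) ^ 2 by norm_num, Real.sqrt_sq (by norm_num)]]
      exact Real.sqrt_le_sqrt hx14
    nlinarith [Real.sqrt_nonneg (α * (1 - α))]
  -- (2α-1)(1-α) ≥ (1/s)(1/20)
  have hkey : 1 / s * (1 / 20) ≤ (2 * α - 1) * (1 - α) := by
    have h3 : 1 / s ≤ 2 * α - 1 := by
      have : 1 / (2 * s) = (1 / s) / 2 := by ring
      linarith [hα₁.trans_eq rfl, this ▸ hα₁]
    have h4 : (1 / 20 : ℝ) ≤ 1 - α := by linarith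
    have h5 : (0 : ℝ) ≤ 1 / s := by positivity
    nlinarith
  have hfin : 1 / (20 * s) = 1 / s * (1 / 20) := by
    field_simp
  rw [h1, hfin]
  nlinarith [h2, hkey]
end

section
/- For every real J ≥ 1 and reals α, β with 1/2 ≤ α ≤ β ≤ 1, if either (α < 19/20 and 2α−1 ≥ 1/√(2J)) or (α < 1/2 + 1/(2√(2J)) and β ≥ 1/2 + 1/(2√(2J))), then β^{1/2}α^{1/2} + β^{1/2}(1−α)^{1/2} ≥ 1 + 1/(20√(2J)). -/
private lemma aux_le_of_sq (a b : ℝ) (hb : 0 ≤ b) (h : a ^ 2 ≤ b ^ 2) : a ≤ b := by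
  calc a ≤ |a| := le_abs_self a
  _ = Real.sqrt (a ^ 2) := (Real.sqrt_sq_eq_abs a).symm
  _ ≤ Real.sqrt (b ^ 2) := Real.sqrt_le_sqrt h
  _ = b := Real.sqrt_sq hb

private lemma aux_key1 (x y : ℝ) (hx0 : 0 ≤ x) (hy0 : 0 ≤ y)
    (hxy2 : x ^ 2 + y ^ 2 = 1) (ht1 : 1 / 20 < y ^ 2) (ht2 : y ^ 2 ≤ 1 / 2) :
    1 + 18 * y ^ 2 ≤ 20 * (x * y) := by
  have hsq : (1 + 18 * y ^ 2) ^ 2 ≤ (20 * (x * y)) ^ 2 := by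
    nlinarith [mul_nonneg (by linarith : (0:ℝ) ≤ 1 / 2 - y ^ 2)
      (by linarith : (0:ℝ) ≤ y ^ 2 - 1 / 362)]
  exact aux_le_of_sq _ _ (by positivity) hsq

private lemma aux_key2 (u : ℝ) (hu0 : 0 < u) (hu1 : u ≤ 3 / 4) :
    (1 + u / 20) ^ 2 ≤ (1 + u) / 2 * (2 - 9 * u / 10) := by
  nlinarith [mul_nonneg hu0.le (by linarith : (0:ℝ) ≤ 9 / 20 - 181 * u / 400)]

private lemma aux_key3 (x y u : ℝ) (hx0 : 0 ≤ x) (hy0 : 0 ≤ y)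
    (hu0 : 0 < u) (hu1 : u ≤ 3 / 4) (hxy2 : x ^ 2 + y ^ 2 = 1)
    (hd0 : 0 ≤ 2 * x ^ 2 - 1) (hdu : 2 * x ^ 2 - 1 ≤ u) :
    (1 - 9 * u / 10) / 2 ≤ x * y := by
  have h4 : 1 - u ^ 2 ≤ 4 * (x * y) ^ 2 := by
    nlinarith [mul_nonneg (by linarith : (0:ℝ) ≤ u - (2 * x ^ 2 - 1))
      (by linarith : (0:ℝ) ≤ u + (2 * x ^ 2 - 1))]
  have h5 : (1 - 9 * u / 10) ^ 2 ≤ 1 - u ^ 2 := by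
    nlinarith [mul_nonneg hu0.le (by linarith : (0:ℝ) ≤ 9 / 5 - 181 * u / 100)]
  exact aux_le_of_sq _ _ (mul_nonneg hx0 hy0) (by nlinarith)

set_option maxHeartbeats 1000000 in
theorem cases_combined_inequality (J α β : ℝ) (hJ : 1 ≤ J)
    (hα : 1 / 2 ≤ α) (hαβ : α ≤ β) (hβ : β ≤ 1)
    (h : (α < 19 / 20 ∧ 2 * α - 1 ≥ 1 / Real.sqrt (2 * J)) ∨
         (α < 1 / 2 + 1 / (2 * Real.sqrt (2 * J)) ∧
          β ≥ 1 / 2 + 1 / (2 * Real.sqrt (2 * J)))) :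
    Real.sqrt β * Real.sqrt α + Real.sqrt β * Real.sqrt (1 - α) ≥
      1 + 1 / (20 * Real.sqrt (2 * J)) := by
  set s := Real.sqrt (2 * J) with hsdef
  have hs2 : s ^ 2 = 2 * J := Real.sq_sqrt (by linarith)
  have hspos : 0 < s := Real.sqrt_pos.mpr (by linarith)
  set u := 1 / s with hudef
  have hupos : 0 < u := by positivity
  have hu2 : u ^ 2 ≤ 1 / 2 := by
    rw [hudef, div_pow, hs2, div_le_div_iff₀ (by linarith) (by norm_num)]
    linarith
  have hu1 : u ≤ 3 / 4 := by
    refine aux_le_of_sq u (3 / 4) (by norm_num) ?_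
    norm_num
    linarith
  have hα0 : 0 ≤ α := by linarith
  have h1α : 0 ≤ 1 - α := by linarith
  have hβ0 : 0 ≤ β := by linarith
  set x := Real.sqrt α with hxdef
  set y := Real.sqrt (1 - α) with hydef
  set b := Real.sqrt β with hbdef
  have hx2 : x ^ 2 = α := Real.sq_sqrt hα0
  have hy2 : y ^ 2 = 1 - α := Real.sq_sqrt h1α
  have hb2 : b ^ 2 = β := Real.sq_sqrt hβ0
  have hx0 : 0 ≤ x := Real.sqrt_nonneg _
  have hy0 : 0 ≤ y := Real.sqrt_nonneg _
  have hb0 : 0 ≤ b := Real.sqrt_nonneg _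
  have hxy2 : x ^ 2 + y ^ 2 = 1 := by rw [hx2, hy2]; ring
  have hxhalf : 1 / 2 ≤ x ^ 2 := by rw [hx2]; exact hα
  have hgoal : 1 + 1 / (20 * s) = 1 + u / 20 := by rw [hudef]; ring
  have hbx : x ≤ b := Real.sqrt_le_sqrt hαβ
  rw [hgoal]
  clear_value s u x y b
  rcases h with ⟨h1, h2⟩ | ⟨h1, h2⟩
  · -- Case 1 : α < 19/20 and 2α - 1 ≥ u
    have ht1 : 1 / 20 < y ^ 2 := by rw [hy2]; linarith
    have ht2 : y ^ 2 ≤ 1 / 2 := by linarith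
    have hu' : u ≤ x ^ 2 - y ^ 2 := by rw [hx2, hy2]; linarith [h2]
    have key := aux_key1 x y hx0 hy0 hxy2 ht1 ht2
    have hxy : x * y ≥ y ^ 2 + u / 20 := by linarith
    have hb1 : b * x ≥ x ^ 2 := by
      rw [sq]; exact mul_le_mul_of_nonneg_right hbx hx0
    have hb2' : b * y ≥ x * y := mul_le_mul_of_nonneg_right hbx hy0
    linarith
  · -- Case 2 : α < 1/2 + u/2 and β ≥ 1/2 + u/2
    have hhalf : 1 / (2 * s) = u / 2 := by rw [hudef]; ring
    have hb' : (1 + u) / 2 ≤ b ^ 2 := by rw [hb2]; linarith [h2, hhalf]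
    have hx' : x ^ 2 ≤ (1 + u) / 2 := by rw [hx2]; linarith [h1, hhalf]
    have hd0 : 0 ≤ 2 * x ^ 2 - 1 := by linarith
    have hdu : 2 * x ^ 2 - 1 ≤ u := by linarith
    have hc := aux_key3 x y u hx0 hy0 hupos hu1 hxy2 hd0 hdu
    have hxy0 : (0:ℝ) ≤ 1 + 2 * (x * y) := by
      have := mul_nonneg hx0 hy0; linarith
    have hL2 : (b * x + b * y) ^ 2 ≥ (1 + u / 20) ^ 2 := by
      have e2 : (b * x + b * y) ^ 2 = b ^ 2 * (1 + 2 * (x * y)) := by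
        linear_combination b ^ 2 * hxy2
      rw [e2]
      have t1 : (1 + u) / 2 * (1 + 2 * (x * y)) ≤ b ^ 2 * (1 + 2 * (x * y)) :=
        mul_le_mul_of_nonneg_right hb' hxy0
      have t2 : (1 + u) / 2 * (2 - 9 * u / 10) ≤ (1 + u) / 2 * (1 + 2 * (x * y)) :=
        mul_le_mul_of_nonneg_left (by linarith) (by linarith)
      have t3 := aux_key2 u hupos hu1
      linarith
    exact aux_le_of_sq _ _ (by positivity) hL2
end

section
/- Let K ≥ 1 and let (K_i) be a sequence of reals with K₁ = K, K_i ≥ 1, and K_{i+1} = K_i / (1 + 1/(100√K_i)) for all i up to its length m. Then m = O(√K). -/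
lemma step_bound_aux (x : ℝ) (hx : 1 ≤ x) :
    Real.sqrt (x ^ 2 / (1 + 1 / (100 * x))) ≤ x - 1 / 300 := by
  have hx0 : (0:ℝ) < x := by linarith
  have hd : (0:ℝ) < 1 + 1 / (100 * x) := by positivity
  have hb : (0:ℝ) ≤ x - 1 / 300 := by linarith
  rw [show x - 1/300 = Real.sqrt ((x - 1/300) ^ 2) from (Real.sqrt_sq hb).symm]
  apply Real.sqrt_le_sqrt
  rw [div_le_iff₀ hd]
  have he : (1 / (100 * x)) * (100 * x) = 1 := by field_simp
  nlinarith [he, hx, sq_nonneg (x - 1), mul_pos hx0 hx0]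

theorem iteration_count_bound :
    ∃ C > 0, ∀ (K : ℝ) (m : ℕ) (Ki : ℕ → ℝ), 1 ≤ K → Ki 0 = K →
      (∀ i < m, 1 ≤ Ki i) →
      (∀ i, i + 1 < m → Ki (i + 1) = Ki i / (1 + 1 / (100 * Real.sqrt (Ki i)))) →
      (m : ℝ) ≤ C * Real.sqrt K := by
  refine ⟨300, by norm_num, ?_⟩
  intro K m Ki hK h0 hge hrec
  have hsK : 1 ≤ Real.sqrt K := by
    rw [show (1:ℝ) = Real.sqrt 1 from (Real.sqrt_one).symm]
    exact Real.sqrt_le_sqrt hK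
  have key : ∀ i, i < m → Real.sqrt (Ki i) ≤ Real.sqrt K - i / 300 := by
    intro i
    induction i with
    | zero => intro _; simp [h0]
    | succ n ih =>
      intro h
      have hn : n < m := by omega
      have h1 : 1 ≤ Ki n := hge n hn
      have hs : 1 ≤ Real.sqrt (Ki n) := by
        rw [show (1:ℝ) = Real.sqrt 1 from (Real.sqrt_one).symm]
        exact Real.sqrt_le_sqrt h1
      have hsq : Real.sqrt (Ki n) ^ 2 = Ki n := Real.sq_sqrt (by linarith)
      have hrec' := hrec n h
      have : Real.sqrt (Ki (n+1)) ≤ Real.sqrt (Ki n) - 1 / 300 := by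
        have h2 := step_bound_aux (Real.sqrt (Ki n)) hs
        rw [hsq] at h2
        rw [hrec']; exact h2
      have ihn := ih hn
      push_cast
      linarith
  rcases Nat.eq_zero_or_pos m with hm | hm
  · subst hm; simp
  · have hlt : m - 1 < m := by omega
    have h1 : 1 ≤ Ki (m - 1) := hge _ hlt
    have hs : 1 ≤ Real.sqrt (Ki (m - 1)) := by
      rw [show (1:ℝ) = Real.sqrt 1 from (Real.sqrt_one).symm]
      exact Real.sqrt_le_sqrt h1
    have hk := key _ hlt
    have hcast : ((m - 1 : ℕ) : ℝ) = (m : ℝ) - 1 := by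
      have := Nat.cast_sub (by omega : 1 ≤ m) (R := ℝ)
      simpa using this
    rw [hcast] at hk
    nlinarith
end

section
/- If K_l, K_{l+1}, …, K_{l+j} is a sequence of reals in the interval (K/e^{s+1}, K/e^s] with K_{i+1} = K_i/(1 + 1/(100√K_i)), then (1 + 1/(100√(K/e^s)))^j ≤ e, and hence j = O(√(K/e^s)). -/
theorem interval_count_bound :
    ∃ C > 0, ∀ (K : ℝ) (s l j : ℕ) (Ki : ℕ → ℝ), 1 ≤ K →
      (∀ i, l ≤ i → i ≤ l + j →
        Ki i ∈ Set.Ioc (K / Real.exp (s + 1)) (K / Real.exp s)) →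
      (∀ i, l ≤ i → i < l + j →
        Ki (i + 1) = Ki i / (1 + 1 / (100 * Real.sqrt (Ki i)))) →
      (1 + 1 / (100 * Real.sqrt (K / Real.exp s))) ^ j ≤ Real.exp 1 ∧
        (j : ℝ) ≤ C * Real.sqrt (K / Real.exp s) := by
  refine ⟨200, by norm_num, fun K s l j Ki hK hmem hrec => ?_⟩
  have hK0 : (0:ℝ) < K := lt_of_lt_of_le one_pos hK
  set X := K / Real.exp s with hX
  have hX0 : 0 < X := div_pos hK0 (Real.exp_pos _)
  have hsX : 0 < Real.sqrt X := Real.sqrt_pos.mpr hX0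
  set ε := 1 / (100 * Real.sqrt X) with hε
  have hε0 : 0 < ε := by positivity
  have hpos : ∀ i, l ≤ i → i ≤ l + j → 0 < Ki i := fun i h1 h2 =>
    lt_trans (div_pos hK0 (Real.exp_pos _)) ((hmem i h1 h2).1)
  have key : ∀ n, n ≤ j → (1 + ε) ^ n * Ki (l + n) ≤ Ki l := by
    intro n hn
    induction n with
    | zero => simp
    | succ m ih =>
      have hm : m ≤ j := Nat.le_of_succ_le hn
      have hmem' := hmem (l + m) (Nat.le_add_right _ _) (by omega)
      have hpos' := hpos (l + m) (Nat.le_add_right _ _) (by omega)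
      have hsub : Real.sqrt (Ki (l + m)) ≤ Real.sqrt X := Real.sqrt_le_sqrt hmem'.2
      have hspos : 0 < Real.sqrt (Ki (l + m)) := Real.sqrt_pos.mpr hpos'
      have hεm : ε ≤ 1 / (100 * Real.sqrt (Ki (l + m))) := by
        rw [hε]
        apply one_div_le_one_div_of_le (by positivity)
        nlinarith
      have hrec' := hrec (l + m) (Nat.le_add_right _ _) (by omega)
      have heq : Ki (l + (m + 1)) = Ki (l + m) / (1 + 1 / (100 * Real.sqrt (Ki (l + m)))) := by
        rw [show l + (m + 1) = (l + m) + 1 from by omega, hrec']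
      have hd0 : 0 < 1 + 1 / (100 * Real.sqrt (Ki (l + m))) := by positivity
      have hstep : Ki (l + (m + 1)) * (1 + ε) ≤ Ki (l + m) := by
        rw [heq, div_mul_eq_mul_div, div_le_iff₀ hd0]
        have h1 : 1 + ε ≤ 1 + 1 / (100 * Real.sqrt (Ki (l + m))) := by linarith
        nlinarith
      have hpow : (0:ℝ) ≤ (1 + ε) ^ m := by positivity
      calc (1 + ε) ^ (m + 1) * Ki (l + (m + 1))
          = (1 + ε) ^ m * (Ki (l + (m + 1)) * (1 + ε)) := by ring
        _ ≤ (1 + ε) ^ m * Ki (l + m) := by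
            exact mul_le_mul_of_nonneg_left hstep hpow
        _ ≤ Ki l := ih hm
  have hkey := key j le_rfl
  have hlo := (hmem (l + j) (Nat.le_add_right _ _) le_rfl).1
  have hhi := (hmem l le_rfl (Nat.le_add_right _ _)).2
  have hpow0 : (0:ℝ) < (1 + ε) ^ j := by positivity
  have hexp : Real.exp ((s:ℝ) + 1) = Real.exp s * Real.exp 1 := Real.exp_add _ _
  have hq : (1 + ε) ^ j ≤ Real.exp 1 := by
    have h1 : (1 + ε) ^ j * (K / Real.exp ((s:ℝ) + 1)) ≤ K / Real.exp s := by
      calc (1 + ε) ^ j * (K / Real.exp ((s:ℝ) + 1))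
          ≤ (1 + ε) ^ j * Ki (l + j) := by
            exact mul_le_mul_of_nonneg_left (le_of_lt hlo) (le_of_lt hpow0)
        _ ≤ Ki l := hkey
        _ ≤ K / Real.exp s := hhi
    have h2 : K / Real.exp ((s:ℝ) + 1) * Real.exp 1 = K / Real.exp s := by
      rw [hexp]; field_simp
    have h3 : 0 < K / Real.exp ((s:ℝ) + 1) := div_pos hK0 (Real.exp_pos _)
    nlinarith
  refine ⟨hq, ?_⟩
  have hbern : 1 + (j : ℝ) * ε ≤ (1 + ε) ^ j := by
    have := one_add_mul_le_pow (a := ε) (by linarith) j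
    linarith
  have he : Real.exp 1 < 2.7182818286 := Real.exp_one_lt_d9
  have hjε : (j : ℝ) * ε ≤ 2 := by nlinarith
  have h100 : (0:ℝ) < 100 * Real.sqrt X := by positivity
  rw [hε, mul_one_div, div_le_iff₀ h100] at hjε
  linarith
end

section
/- Suppose A, B ⊆ 𝔽₂ⁿ are nonempty with Dbl(A,B) ≤ K for some K ≥ 1. Then there exist subsets A′ ⊆ A, B′ ⊆ B with |A′| ≥ c·exp(−C√K)·|A| and |B′| ≥ c·exp(−C√K)·|B| (for absolute constants c, C > 0), and a real J with 1 ≤ J ≤ K, such that Dbl(A′,B′) ≤ J and the quadruple (A′,B′,A′,B′) is coherently 1/√(2J)-flat. -/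
open Finset Pointwise

noncomputable def hatOne {n : ℕ} (A : Finset (Fin n → ZMod 2)) (ξ : Fin n → ZMod 2) : ℝ :=
  (∑ x ∈ A, (-1 : ℝ) ^ (∑ i, ξ i * x i : ZMod 2).val) / 2 ^ n

def spec {n : ℕ} (δ : ℝ) (A : Finset (Fin n → ZMod 2)) : Set (Fin n → ZMod 2) :=
  {ξ | δ * A.card / 2 ^ n ≤ |hatOne A ξ|}

def CoherentlyFlat {n : ℕ} (δ : ℝ) (A₁ A₂ A₃ A₄ : Finset (Fin n → ZMod 2)) : Prop :=
  ∀ ξ : Fin n → ZMod 2,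
    (ξ ∈ spec (9 / 10) A₁ ∧ ξ ∈ spec (9 / 10) A₂ ∧
     ξ ∈ spec (9 / 10) A₃ ∧ ξ ∈ spec (9 / 10) A₄) ∨
    (ξ ∉ spec δ A₁ ∧ ξ ∉ spec δ A₂ ∧ ξ ∉ spec δ A₃ ∧ ξ ∉ spec δ A₄)

noncomputable def dbl {n : ℕ} (A B : Finset (Fin n → ZMod 2)) : ℝ :=
  ((A + B).card : ℝ) / (Real.sqrt A.card * Real.sqrt B.card)

/-
Density increment on `√(dbl A B)`. If `(A, B, A, B)` is not coherently `δ`-flat with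
`δ = 1/√(2 dbl A B)`, some character `ξ` has bias at least `δ` on one of the sets and at most `9/10`
on the other. Restrict the more biased set, say `A`, to its majority fibre `A_i` of `ξ`, and `B` to
a fibre `B_j`. Since `A_i + B_j` lies in the fibre `(A + B)_{i+j}`, a mediant choice of `j` gives
`dbl A_i B_j ≤ dbl A B / √(1 + δ/2)`, so `√dbl` drops by at least `1/23`, while both sets keep at
least a twentieth of their size. After at most `23 √K` rounds the pair is flat, having lost a
factor at most `20 ^ (23 √K) ≤ exp (69 √K)`.
-/

lemma ZMod.eq_zero_or_eq_one (k : ZMod 2) : k = 0 ∨ k = 1 := by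
  revert k; decide

lemma ZMod.sum_univ_two {M : Type*} [AddCommMonoid M] (f : ZMod 2 → M) : ∑ k, f k = f 0 + f 1 :=
  Fin.sum_univ_two f

/- `m` and `l` are the normalised biases `|charSum| / #` of the two sets: `(1 + m) / 2` is the
relative size of the majority fibre of the first, and `1 + √(1 - l ^ 2)` is
`(∑ k, √(#Q_k / #Q)) ^ 2` for the second. -/
lemma two_add_le_one_add_mul_one_add_sqrt {l m δ : ℝ} (hl : 0 ≤ l) (hlm : l ≤ m)
    (hl9 : l ≤ 9 / 10) (hδm : δ ≤ m) (hδ : δ ^ 2 ≤ 1 / 2) :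
    2 + δ ≤ (1 + m) * (1 + √(1 - l ^ 2)) := by
  set s := √(1 - l ^ 2)
  have hs : s ^ 2 = 1 - l ^ 2 := Real.sq_sqrt (by nlinarith)
  have hs0 : 0 ≤ s := Real.sqrt_nonneg _
  have hδ' : δ ≤ 7072 / 10000 := by nlinarith
  have hms : 0 ≤ (1 + m) * s := by nlinarith
  rcases le_or_gt m (4 / 5) with hm | hm
  · have h1 : 1 ≤ (1 + l) ^ 3 * (1 - l) := by nlinarith [mul_nonneg hl (mul_nonneg hl hl)]
    have h2 : (1 + l) ^ 2 ≤ (1 + m) ^ 2 := by nlinarith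
    have : 1 ≤ ((1 + m) * s) ^ 2 := by
      rw [mul_pow, hs]; nlinarith [mul_le_mul_of_nonneg_right h2 (show 0 ≤ 1 - l ^ 2 by nlinarith)]
    nlinarith
  rcases le_or_gt (9 / 10) m with hm9 | hm9
  · have : 435 / 1000 ≤ s := by nlinarith
    nlinarith
  · have : (17072 / 10000 - m) ^ 2 ≤ ((1 + m) * s) ^ 2 := by
      rw [mul_pow, hs]
      nlinarith [mul_nonneg (sub_nonneg.2 hm.le) (sub_nonneg.2 hm9.le), sq_nonneg (m - 85 / 100),
        mul_nonneg (mul_nonneg (sub_nonneg.2 hm.le) (sub_nonneg.2 hm9.le)) (sub_nonneg.2 hm.le),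
        mul_nonneg (sq_nonneg (1 + m)) (show 0 ≤ m ^ 2 - l ^ 2 by nlinarith)]
    nlinarith

lemma two_add_mul_mul_le_add_mul_add_sqrt {p q E F δ : ℝ} (hp : 0 < p) (hq : 0 < q) (hF : 0 ≤ F)
    (hFq : F ≤ 9 / 10 * q) (hFE : F * p ≤ E * q) (hδE : δ * p ≤ E) (hδ : δ ^ 2 ≤ 1 / 2) :
    (2 + δ) * (p * q) ≤ (p + E) * (q + √(q ^ 2 - F ^ 2)) := by
  have key := two_add_le_one_add_mul_one_add_sqrt (l := F / q) (m := E / p) (by positivity)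
    (by rwa [div_le_div_iff₀ hq hp]) (by rwa [div_le_iff₀ hq]) (by rwa [le_div_iff₀ hp]) hδ
  have hsqrt : √(1 - (F / q) ^ 2) = √(q ^ 2 - F ^ 2) / q := by
    rw [← Real.sqrt_sq hq.le, ← Real.sqrt_div' _ (sq_nonneg q), Real.sqrt_sq hq.le]
    congr 1; field_simp
  rw [hsqrt] at key
  calc (2 + δ) * (p * q) ≤ (1 + E / p) * (1 + √(q ^ 2 - F ^ 2) / q) * (p * q) := by gcongr
    _ = (p + E) * (q + √(q ^ 2 - F ^ 2)) := by field_simp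

lemma sqrt_le_sqrt_sub_of_mul_sqrt_le {D J : ℝ} (hD : 0 ≤ D) (hJ : 1 ≤ J)
    (h : D * √(1 + 1 / √(2 * J) / 2) ≤ J) : √D ≤ √J - 1 / 23 := by
  set r := √J
  have hr : 1 ≤ r := Real.one_le_sqrt.2 hJ
  have hJr : J = r ^ 2 := (Real.sq_sqrt (by linarith)).symm
  have h2 : 14 / 10 ≤ √2 := Real.le_sqrt_of_sq_le (by norm_num)
  have h2' : √2 ≤ 15 / 10 := (Real.sqrt_le_left (by norm_num)).2 (by norm_num)
  rw [Real.sqrt_mul zero_le_two] at h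
  set δ := 1 / (√2 * r)
  have h2r : 1 ≤ √2 * r := by nlinarith
  have hδr : δ * (√2 * r) = 1 := one_div_mul_cancel (by positivity)
  have hδ : 0 < δ := by positivity
  have hδ1 : δ ≤ 1 := by nlinarith [mul_le_mul_of_nonneg_left h2r hδ.le]
  have hu : 1 + δ / 5 ≤ √(1 + δ / 2) := Real.le_sqrt_of_sq_le (by nlinarith)
  have hDr : D ≤ (r - 1 / 23) ^ 2 := by
    have : r ^ 2 ≤ (r - 1 / 23) ^ 2 * (1 + δ / 5) := by nlinarith
    nlinarith [mul_le_mul_of_nonneg_left hu hD]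
  calc √D ≤ √((r - 1 / 23) ^ 2) := Real.sqrt_le_sqrt hDr
    _ = r - 1 / 23 := Real.sqrt_sq (by linarith)

lemma twenty_le_exp_three : (20 : ℝ) ≤ Real.exp 3 := by
  have h := pow_le_pow_left₀ (by norm_num) Real.exp_one_gt_d9.le 3
  rw [← Real.exp_nat_mul] at h
  norm_num at h
  linarith

lemma exp_mul_le_of_le_twenty_mul {a a₁ a' s s₁ t : ℝ} (ha₁ : 0 ≤ a₁) (ha : a ≤ 20 * a₁)
    (hs : s₁ ≤ s - 1 / 23) (h : Real.exp (-69 * (s₁ - t)) * a₁ ≤ a') :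
    Real.exp (-69 * (s - t)) * a ≤ a' :=
  calc Real.exp (-69 * (s - t)) * a ≤ Real.exp (-69 * (s - t)) * (Real.exp 3 * a₁) := by
        gcongr; exact ha.trans (by gcongr; exact twenty_le_exp_three)
    _ = Real.exp (-69 * (s - t) + 3) * a₁ := by rw [Real.exp_add]; ring
    _ ≤ Real.exp (-69 * (s₁ - t)) * a₁ := by gcongr; linarith
    _ ≤ a' := h

section Fibres

variable {G : Type*} [AddMonoid G] (φ : G →+ ZMod 2)

def fibre (k : ZMod 2) (A : Finset G) : Finset G := {x ∈ A | φ x = k}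

noncomputable def charSum (A : Finset G) : ℝ := ∑ x ∈ A, (-1 : ℝ) ^ (φ x).val

variable (A : Finset G)

lemma sum_card_fibre : ∑ k, #(fibre φ k A) = #A :=
  (card_eq_sum_card_fiberwise fun _ _ ↦ mem_univ _).symm

lemma card_fibre_zero_add_card_fibre_one : (#(fibre φ 0 A) + #(fibre φ 1 A) : ℝ) = #A := by
  exact_mod_cast (ZMod.sum_univ_two _).symm.trans (sum_card_fibre φ A)

lemma charSum_eq_card_fibre_sub : charSum φ A = #(fibre φ 0 A) - #(fibre φ 1 A) := by
  have h (k : ZMod 2) :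
      ∑ x ∈ A with φ x = k, (-1 : ℝ) ^ (φ x).val = #(fibre φ k A) * (-1) ^ k.val := by
    rw [sum_congr rfl fun x hx ↦ by rw [(mem_filter.1 hx).2], sum_const, nsmul_eq_mul, fibre]
  rw [charSum, ← sum_fiberwise A φ, ZMod.sum_univ_two]
  simp only [h, ZMod.val_zero, ZMod.val_one, pow_zero, pow_one]
  ring

lemma card_sub_abs_charSum_le (k : ZMod 2) : #A - |charSum φ A| ≤ 2 * #(fibre φ k A) := by
  have hsum := card_fibre_zero_add_card_fibre_one φ A
  have := neg_abs_le ((#(fibre φ 0 A) : ℝ) - #(fibre φ 1 A))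
  have := le_abs_self ((#(fibre φ 0 A) : ℝ) - #(fibre φ 1 A))
  rw [charSum_eq_card_fibre_sub]
  rcases k.eq_zero_or_eq_one with rfl | rfl <;> linarith

lemma exists_two_mul_card_fibre_eq : ∃ k, 2 * (#(fibre φ k A) : ℝ) = #A + |charSum φ A| := by
  have hsum := card_fibre_zero_add_card_fibre_one φ A
  rw [charSum_eq_card_fibre_sub]
  rcases abs_cases ((#(fibre φ 0 A) : ℝ) - #(fibre φ 1 A)) with ⟨h, -⟩ | ⟨h, -⟩
  · exact ⟨0, by linarith⟩
  · exact ⟨1, by linarith⟩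

lemma sq_sum_sqrt_card_fibre :
    (∑ k, √(#(fibre φ k A) : ℝ)) ^ 2 = #A + √(#A ^ 2 - charSum φ A ^ 2) := by
  have hsum := card_fibre_zero_add_card_fibre_one φ A
  have h4 : (#A : ℝ) ^ 2 - charSum φ A ^ 2 =
      (2 * √(#(fibre φ 0 A) : ℝ) * √(#(fibre φ 1 A) : ℝ)) ^ 2 := by
    rw [mul_pow, mul_pow, Real.sq_sqrt (by positivity), Real.sq_sqrt (by positivity),
      charSum_eq_card_fibre_sub, ← hsum]
    ring
  rw [h4, Real.sqrt_sq (by positivity), ZMod.sum_univ_two, add_sq, Real.sq_sqrt (by positivity),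
    Real.sq_sqrt (by positivity), ← hsum]
  ring

lemma exists_card_fibre_mul_le (S : Finset G) (i : ZMod 2) :
    ∃ j, #(fibre φ (i + j) S) * ∑ k, √(#(fibre φ k A) : ℝ) ≤ √(#(fibre φ j A) : ℝ) * #S := by
  have hS : ∑ j, (#(fibre φ (i + j) S) : ℝ) = #S :=
    (Equiv.sum_comp (Equiv.addLeft i) fun k ↦ (#(fibre φ k S) : ℝ)).trans
      (mod_cast sum_card_fibre φ S)
  obtain ⟨j, -, hj⟩ := exists_le_of_sum_le (s := univ) univ_nonempty
    (f := fun j ↦ #(fibre φ (i + j) S) * ∑ k, √(#(fibre φ k A) : ℝ))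
    (g := fun j ↦ √(#(fibre φ j A) : ℝ) * #S)
    (by rw [← sum_mul, ← sum_mul, hS, mul_comm])
  exact ⟨j, hj⟩

variable [DecidableEq G]

lemma fibre_add_fibre_subset (B : Finset G) (i j : ZMod 2) :
    fibre φ i A + fibre φ j B ⊆ fibre φ (i + j) (A + B) := by
  rintro _ hz
  obtain ⟨a, ha, b, hb, rfl⟩ := mem_add.1 hz
  simp only [fibre, mem_filter] at ha hb ⊢
  exact ⟨add_mem_add ha.1 hb.1, by rw [map_add, ha.2, hb.2]⟩

theorem exists_fibres_card_add_mul_le {P Q : Finset G} (hP : P.Nonempty) (hQ : Q.Nonempty)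
    {δ : ℝ} (hδ : δ ^ 2 ≤ 1 / 2) (hPbias : δ * #P ≤ |charSum φ P|)
    (hQbias : |charSum φ Q| ≤ 9 / 10 * #Q) (hPQ : |charSum φ Q| * #P ≤ |charSum φ P| * #Q) :
    ∃ i j, (#P : ℝ) ≤ 20 * #(fibre φ i P) ∧ (#Q : ℝ) ≤ 20 * #(fibre φ j Q) ∧
      #(fibre φ i P + fibre φ j Q) * √(1 + δ / 2) * √(#P * #Q) ≤
        #(P + Q) * √(#(fibre φ i P) * #(fibre φ j Q)) := by
  have hp : (0 : ℝ) < #P := by exact_mod_cast hP.card_pos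
  have hq : (0 : ℝ) < #Q := by exact_mod_cast hQ.card_pos
  obtain ⟨i, hi⟩ := exists_two_mul_card_fibre_eq φ P
  obtain ⟨j, hj⟩ := exists_card_fibre_mul_le φ Q (P + Q) i
  set b := ∑ k, √(#(fibre φ k Q) : ℝ)
  refine ⟨i, j, by linarith [abs_nonneg (charSum φ P)],
    by linarith [card_sub_abs_charSum_le φ Q j], ?_⟩
  have hgain : √(1 + δ / 2) * √(#P * #Q) ≤ √(#(fibre φ i P) : ℝ) * b := by
    rw [← Real.sqrt_mul' _ (by positivity), ← Real.sqrt_sq (show 0 ≤ b by positivity),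
      ← Real.sqrt_mul (by positivity)]
    refine Real.sqrt_le_sqrt ?_
    rw [sq_sum_sqrt_card_fibre, ← sq_abs (charSum φ Q),
      show (#(fibre φ i P) : ℝ) = (#P + |charSum φ P|) / 2 by linarith]
    linarith [two_add_mul_mul_le_add_mul_add_sqrt hp hq (abs_nonneg _) hQbias hPQ hPbias hδ]
  have hsub : (#(fibre φ i P + fibre φ j Q) : ℝ) ≤ #(fibre φ (i + j) (P + Q)) := by
    exact_mod_cast card_le_card (fibre_add_fibre_subset φ P Q i j)
  calc #(fibre φ i P + fibre φ j Q) * √(1 + δ / 2) * √(#P * #Q)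
      ≤ #(fibre φ (i + j) (P + Q)) * (√(#(fibre φ i P) : ℝ) * b) := by
        rw [mul_assoc]; gcongr
    _ = √(#(fibre φ i P) : ℝ) * (#(fibre φ (i + j) (P + Q)) * b) := by ring
    _ ≤ √(#(fibre φ i P) : ℝ) * (√(#(fibre φ j Q) : ℝ) * #(P + Q)) := by gcongr
    _ = #(P + Q) * √(#(fibre φ i P) * #(fibre φ j Q)) := by
        rw [Real.sqrt_mul (by positivity)]; ring

end Fibres

section Cube

variable {n : ℕ}

def dotProductHom (ξ : Fin n → ZMod 2) : (Fin n → ZMod 2) →+ ZMod 2 :=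
  (dotProductBilin (ZMod 2) (ZMod 2) ξ).toAddMonoidHom

lemma hatOne_eq_charSum (A : Finset (Fin n → ZMod 2)) (ξ : Fin n → ZMod 2) :
    hatOne A ξ = charSum (dotProductHom ξ) A / 2 ^ n :=
  rfl

lemma mem_spec_iff (δ : ℝ) (A : Finset (Fin n → ZMod 2)) (ξ : Fin n → ZMod 2) :
    ξ ∈ spec δ A ↔ δ * #A ≤ |charSum (dotProductHom ξ) A| := by
  have h2 : (0 : ℝ) < 2 ^ n := by positivity
  show δ * #A / 2 ^ n ≤ |hatOne A ξ| ↔ _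
  rw [hatOne_eq_charSum, abs_div, abs_of_pos h2, div_le_div_iff_of_pos_right h2]

lemma exists_bias_of_not_coherentlyFlat {δ : ℝ} {A B : Finset (Fin n → ZMod 2)}
    (h : ¬ CoherentlyFlat δ A B A B) :
    ∃ ξ, (δ * #A ≤ |charSum (dotProductHom ξ) A| ∨ δ * #B ≤ |charSum (dotProductHom ξ) B|) ∧
      (|charSum (dotProductHom ξ) A| < 9 / 10 * #A ∨
        |charSum (dotProductHom ξ) B| < 9 / 10 * #B) := by
  simp only [CoherentlyFlat, mem_spec_iff, not_forall, not_or, not_and_or, not_le, not_lt] at h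
  obtain ⟨ξ, hsmall, hbig⟩ := h
  exact ⟨ξ, by tauto, by tauto⟩

lemma dbl_comm (A B : Finset (Fin n → ZMod 2)) : dbl A B = dbl B A := by
  rw [dbl, dbl, add_comm, mul_comm]

lemma dbl_nonneg (A B : Finset (Fin n → ZMod 2)) : 0 ≤ dbl A B := by
  unfold dbl; positivity

lemma one_le_dbl {A B : Finset (Fin n → ZMod 2)} (hA : A.Nonempty) (hB : B.Nonempty) :
    1 ≤ dbl A B := by
  have hAB : (#A : ℝ) ≤ #(A + B) := mod_cast card_le_card_add_right hB
  have hBA : (#B : ℝ) ≤ #(A + B) := mod_cast card_le_card_add_left hA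
  rw [dbl, one_le_div (by positivity), ← Real.sqrt_mul (by positivity)]
  exact Real.sqrt_le_iff.2 ⟨by positivity, by nlinarith⟩

lemma exists_subsets_dbl_mul_sqrt_le {A B : Finset (Fin n → ZMod 2)} (hA : A.Nonempty)
    (hB : B.Nonempty) (ξ : Fin n → ZMod 2) {δ : ℝ} (hδ : δ ^ 2 ≤ 1 / 2)
    (hbig : δ * #A ≤ |charSum (dotProductHom ξ) A| ∨ δ * #B ≤ |charSum (dotProductHom ξ) B|)
    (hsmall : |charSum (dotProductHom ξ) A| < 9 / 10 * #A ∨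
      |charSum (dotProductHom ξ) B| < 9 / 10 * #B) :
    ∃ A' ⊆ A, ∃ B' ⊆ B, (#A : ℝ) ≤ 20 * #A' ∧ (#B : ℝ) ≤ 20 * #B' ∧
      dbl A' B' * √(1 + δ / 2) ≤ dbl A B := by
  set φ := dotProductHom ξ
  wlog hAB : |charSum φ B| * #A ≤ |charSum φ A| * #B generalizing A B
  · obtain ⟨B', hB', A', hA', hB20, hA20, hdbl⟩ :=
      this hB hA hbig.symm hsmall.symm (by linarith)
    exact ⟨A', hA', B', hB', hA20, hB20, by rwa [dbl_comm, dbl_comm A]⟩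
  have ha : (0 : ℝ) < #A := by exact_mod_cast hA.card_pos
  have hb : (0 : ℝ) < #B := by exact_mod_cast hB.card_pos
  have hAbig : δ * #A ≤ |charSum φ A| :=
    hbig.elim id fun h ↦ le_of_mul_le_mul_right (by nlinarith) hb
  have hBsmall : |charSum φ B| ≤ 9 / 10 * #B :=
    hsmall.elim (fun h ↦ le_of_mul_le_mul_right (by nlinarith) ha) le_of_lt
  obtain ⟨i, j, hi, hj, hcard⟩ := exists_fibres_card_add_mul_le φ hA hB hδ hAbig hBsmall hAB
  refine ⟨fibre φ i A, filter_subset _ _, fibre φ j B, filter_subset _ _, hi, hj, ?_⟩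
  have hi0 : (0 : ℝ) < #(fibre φ i A) := by linarith
  have hj0 : (0 : ℝ) < #(fibre φ j B) := by linarith
  rw [dbl, dbl, ← Real.sqrt_mul hi0.le, ← Real.sqrt_mul ha.le, div_mul_eq_mul_div,
    div_le_div_iff₀ (by positivity) (by positivity)]
  exact hcard

lemma exists_subsets_sqrt_dbl_le_sub {A B : Finset (Fin n → ZMod 2)} (hA : A.Nonempty)
    (hB : B.Nonempty) (hflat : ¬ CoherentlyFlat (1 / √(2 * dbl A B)) A B A B) :
    ∃ A' ⊆ A, ∃ B' ⊆ B, (#A : ℝ) ≤ 20 * #A' ∧ (#B : ℝ) ≤ 20 * #B' ∧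
      √(dbl A' B') ≤ √(dbl A B) - 1 / 23 := by
  have hJ := one_le_dbl hA hB
  have hδ : (1 / √(2 * dbl A B)) ^ 2 ≤ 1 / 2 := by
    rw [div_pow, one_pow, Real.sq_sqrt (by linarith)]
    gcongr; linarith
  obtain ⟨ξ, hbig, hsmall⟩ := exists_bias_of_not_coherentlyFlat hflat
  obtain ⟨A', hA', B', hB', hA20, hB20, hdbl⟩ :=
    exists_subsets_dbl_mul_sqrt_le hA hB ξ hδ hbig hsmall
  exact ⟨A', hA', B', hB', hA20, hB20, sqrt_le_sqrt_sub_of_mul_sqrt_le (dbl_nonneg _ _) hJ hdbl⟩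

theorem exists_subsets_coherentlyFlat (A B : Finset (Fin n → ZMod 2)) (hA : A.Nonempty)
    (hB : B.Nonempty) :
    ∃ A' ⊆ A, ∃ B' ⊆ B, A'.Nonempty ∧ B'.Nonempty ∧ dbl A' B' ≤ dbl A B ∧
      Real.exp (-69 * (√(dbl A B) - √(dbl A' B'))) * #A ≤ #A' ∧
      Real.exp (-69 * (√(dbl A B) - √(dbl A' B'))) * #B ≤ #B' ∧
      CoherentlyFlat (1 / √(2 * dbl A' B')) A' B' A' B' := by
  induction hN : #A + #B using Nat.strong_induction_on generalizing A B with
  | _ N ih =>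
  by_cases hflat : CoherentlyFlat (1 / √(2 * dbl A B)) A B A B
  · exact ⟨A, subset_rfl, B, subset_rfl, hA, hB, le_rfl, by simp, by simp, hflat⟩
  obtain ⟨A₁, hA₁, B₁, hB₁, hA20, hB20, hdrop⟩ := exists_subsets_sqrt_dbl_le_sub hA hB hflat
  have hA₁ne : A₁.Nonempty := card_pos.1 <| Nat.cast_pos.1 <|
    pos_of_mul_pos_right ((Nat.cast_pos.2 hA.card_pos).trans_le hA20) (by norm_num)
  have hB₁ne : B₁.Nonempty := card_pos.1 <| Nat.cast_pos.1 <|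
    pos_of_mul_pos_right ((Nat.cast_pos.2 hB.card_pos).trans_le hB20) (by norm_num)
  have hlt : #A₁ + #B₁ < N := by
    by_contra! hle
    have hA₁A : A₁ = A := eq_of_subset_of_card_le hA₁ (by linarith [card_le_card hB₁])
    have hB₁B : B₁ = B := eq_of_subset_of_card_le hB₁ (by linarith [card_le_card hA₁])
    rw [hA₁A, hB₁B] at hdrop
    linarith
  obtain ⟨A', hA', B', hB', hA'ne, hB'ne, hdbl, hsA, hsB, hflat'⟩ :=
    ih _ hlt A₁ B₁ hA₁ne hB₁ne rfl
  have hdbl₁ : dbl A₁ B₁ ≤ dbl A B := (Real.sqrt_le_sqrt_iff (dbl_nonneg A B)).1 (by linarith)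
  exact ⟨A', hA'.trans hA₁, B', hB'.trans hB₁, hA'ne, hB'ne, hdbl.trans hdbl₁,
    exp_mul_le_of_le_twenty_mul (by positivity) hA20 hdrop hsA,
    exp_mul_le_of_le_twenty_mul (by positivity) hB20 hdrop hsB, hflat'⟩

end Cube

theorem lemma3 :
    ∃ c > 0, ∃ C > 0, ∀ (n : ℕ) (A B : Finset (Fin n → ZMod 2)),
      A.Nonempty → B.Nonempty → ∀ K : ℝ, 1 ≤ K → dbl A B ≤ K →
      ∃ A' ⊆ A, ∃ B' ⊆ B, ∃ J : ℝ, 1 ≤ J ∧ J ≤ K ∧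
        c * Real.exp (-C * Real.sqrt K) * A.card ≤ A'.card ∧
        c * Real.exp (-C * Real.sqrt K) * B.card ≤ B'.card ∧
        dbl A' B' ≤ J ∧
        CoherentlyFlat (1 / Real.sqrt (2 * J)) A' B' A' B' := by
  refine ⟨1, one_pos, 69, by norm_num, fun n A B hA hB K _ hK ↦ ?_⟩
  obtain ⟨A', hA', B', hB', hA'ne, hB'ne, hdbl, hsA, hsB, hflat⟩ :=
    exists_subsets_coherentlyFlat A B hA hB
  have hexp : Real.exp (-69 * √K) ≤ Real.exp (-69 * (√(dbl A B) - √(dbl A' B'))) :=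
    Real.exp_le_exp.2 (by nlinarith [Real.sqrt_le_sqrt hK, Real.sqrt_nonneg (dbl A' B')])
  refine ⟨A', hA', B', hB', dbl A' B', one_le_dbl hA'ne hB'ne, hdbl.trans hK, ?_, ?_, le_rfl, hflat⟩
  · rw [one_mul]; exact (mul_le_mul_of_nonneg_right hexp (Nat.cast_nonneg _)).trans hsA
  · rw [one_mul]; exact (mul_le_mul_of_nonneg_right hexp (Nat.cast_nonneg _)).trans hsB
end
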